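/- Let f : X → ℝ be a filter on a Lefschetz complex with n = |BD(f)|. A bijection Φ : {1,…,n} → BD(f) is a shallow order of f if and only if Φ is a linear extension of the depth poset Depth(f); in particular, every linear extension of Depth(f) is a shallow order. -/

import Mathlib

attribute [local instance] Classical.propDecidable

/-- A Lefschetz complex over an ambient finite type `C` of potential cells:
a finite set `cells` of cells, a dimension function, and a mod-2 incidence
function `bd` supported on `cells`, with `bd x y ≠ 0` only if
`dim y = dim x + 1`, and `∂∘∂ = 0` mod 2. -/
structure LC (C : Type) [Fintype C] [DecidableEq C] : Type where
  cells : Finset C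
  dim : C → ℤ
  bd : C → C → ZMod 2
  bd_mem : ∀ x y, bd x y ≠ 0 → x ∈ cells ∧ y ∈ cells
  bd_dim : ∀ x y, bd x y ≠ 0 → dim y = dim x + 1
  bd_sq : ∀ x z, ∑ y, bd x y * bd y z = 0

variable {C : Type} [Fintype C] [DecidableEq C]

/-- A filter on a Lefschetz complex: injective on the cells, and increasing
along the facet relation. -/
def IsFilter (L : LC C) (f : C → ℝ) : Prop :=
  (∀ x ∈ L.cells, ∀ y ∈ L.cells, f x = f y → x = y) ∧
  ∀ x y, L.bd x y ≠ 0 → f x < f y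

lemma LC.bd_self (L : LC C) (a : C) : L.bd a a = 0 := by
  by_contra h
  have := L.bd_dim a a h
  omega

/-- The boundary map of the quotient after canceling `(s,t)`:
`∂'(x,y) = ∂(x,y) + ∂(s,y)·∂(x,t)` on the remaining cells, `0` elsewhere. -/
def cancelBd (L : LC C) (s t : C) : C → C → ZMod 2 := fun x y =>
  if x ∈ L.cells \ {s, t} ∧ y ∈ L.cells \ {s, t} then
    L.bd x y + L.bd s y * L.bd x t
  else 0

private lemma zmod2_add_self : ∀ a : ZMod 2, a + a = 0 := by decide

/-- The quotient Lefschetz complex after canceling the facet-cofacet pair `(s,t)`. -/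
noncomputable def cancel (L : LC C) (s t : C) : LC C :=
  if hst : L.bd s t = 1 then
    { cells := L.cells \ {s, t}
      dim := L.dim
      bd := cancelBd L s t
      bd_mem := by
        intro x y h
        unfold cancelBd at h
        split_ifs at h with hc
        · exact hc
        · exact absurd rfl h
      bd_dim := by
        intro x y h
        unfold cancelBd at h
        split_ifs at h with hc
        · by_cases hxy : L.bd x y = 0
          · rw [hxy, zero_add] at h
            have h1 : L.bd s y ≠ 0 := fun hz => by simp [hz] at h
            have h2 : L.bd x t ≠ 0 := fun hz => by simp [hz] at h
            have d1 := L.bd_dim s y h1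
            have d2 := L.bd_dim x t h2
            have d3 := L.bd_dim s t (by simp [hst])
            omega
          · exact L.bd_dim x y hxy
        · exact absurd rfl h
      bd_sq := by
        intro x z
        by_cases hx : x ∈ L.cells \ {s, t}
        swap
        · refine Finset.sum_eq_zero fun y _ => ?_
          unfold cancelBd
          rw [if_neg (fun hc => hx hc.1), zero_mul]
        by_cases hz : z ∈ L.cells \ {s, t}
        swap
        · refine Finset.sum_eq_zero fun y _ => ?_
          have h0 : cancelBd L s t y z = 0 := by
            unfold cancelBd; rw [if_neg (fun hc => hz hc.2)]
          rw [h0, mul_zero]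
        have key : ∀ y, cancelBd L s t x y * cancelBd L s t y z =
            (L.bd x y + L.bd s y * L.bd x t) * (L.bd y z + L.bd s z * L.bd y t) := by
          intro y
          by_cases hy : y ∈ L.cells \ {s, t}
          · unfold cancelBd
            rw [if_pos ⟨hx, hy⟩, if_pos ⟨hy, hz⟩]
          · have lhs0 : cancelBd L s t x y = 0 := by
              unfold cancelBd; rw [if_neg (fun hc => hy hc.2)]
            rw [lhs0, zero_mul]
            by_cases hyc : y ∈ L.cells
            · have hyst : y = s ∨ y = t := by
                simp only [Finset.mem_sdiff, Finset.mem_insert, Finset.mem_singleton] at hy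
                tauto
              rcases hyst with rfl | rfl
              · simp [L.bd_self, hst, zmod2_add_self]
              · simp [L.bd_self, hst, zmod2_add_self]
            · have b1 : L.bd x y = 0 := by
                by_contra hb; exact hyc (L.bd_mem x y hb).2
              have b2 : L.bd s y = 0 := by
                by_contra hb; exact hyc (L.bd_mem s y hb).2
              have b3 : L.bd y z = 0 := by
                by_contra hb; exact hyc (L.bd_mem y z hb).1
              have b4 : L.bd y t = 0 := by
                by_contra hb; exact hyc (L.bd_mem y t hb).1
              rw [b1, b2, b3, b4]
              ring
        rw [Finset.sum_congr rfl fun y _ => key y]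
        have expand : ∀ y : C,
            (L.bd x y + L.bd s y * L.bd x t) * (L.bd y z + L.bd s z * L.bd y t) =
            L.bd x y * L.bd y z + L.bd s z * (L.bd x y * L.bd y t)
              + L.bd x t * (L.bd s y * L.bd y z)
              + L.bd x t * L.bd s z * (L.bd s y * L.bd y t) := by
          intro y; ring
        rw [Finset.sum_congr rfl fun y _ => expand y]
        simp only [Finset.sum_add_distrib, ← Finset.mul_sum, L.bd_sq, mul_zero,
          add_zero, zero_add] }
  else L

/-- The boundary operator on mod-2 chains. -/
noncomputable def bdOp (L : LC C) : (C → ZMod 2) →ₗ[ZMod 2] (C → ZMod 2) where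
  toFun c := fun x => ∑ y, L.bd x y * c y
  map_add' a b := by
    funext x
    simp [mul_add, Finset.sum_add_distrib]
  map_smul' m a := by
    funext x
    simp only [Pi.smul_apply, smul_eq_mul, RingHom.id_apply]
    rw [Finset.mul_sum]
    exact Finset.sum_congr rfl fun y _ => by ring

/-- The `p`-chains of a Lefschetz complex: mod-2 chains supported on cells of
dimension `p`. -/
def chains (L : LC C) (p : ℤ) : Submodule (ZMod 2) (C → ZMod 2) where
  carrier := {c | ∀ x, c x ≠ 0 → x ∈ L.cells ∧ L.dim x = p}
  zero_mem' := by intro x hx; simp at hx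
  add_mem' := by
    intro a b ha hb x hx
    by_cases h1 : a x = 0
    · refine hb x fun h2 => hx ?_
      show a x + b x = 0
      rw [h1, h2, add_zero]
    · exact ha x h1
  smul_mem' := by
    intro m c hc x hx
    refine hc x fun h0 => hx ?_
    show m * c x = 0
    rw [h0, mul_zero]

/-- The `p`-cycles. -/
noncomputable def cycles (L : LC C) (p : ℤ) : Submodule (ZMod 2) (C → ZMod 2) :=
  chains L p ⊓ LinearMap.ker (bdOp L)

/-- The `p`-boundaries. -/
noncomputable def boundaries (L : LC C) (p : ℤ) : Submodule (ZMod 2) (C → ZMod 2) :=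
  Submodule.map (bdOp L) (chains L (p + 1))

/-- The mod-2 homology of a Lefschetz complex in dimension `p`. -/
noncomputable def homology (L : LC C) (p : ℤ) : Type :=
  cycles L p ⧸ (Submodule.comap (cycles L p).subtype (boundaries L p))

noncomputable instance (L : LC C) (p : ℤ) : AddCommGroup (homology L p) :=
  inferInstanceAs (AddCommGroup (cycles L p ⧸
    Submodule.comap (cycles L p).subtype (boundaries L p)))

noncomputable instance (L : LC C) (p : ℤ) : Module (ZMod 2) (homology L p) :=
  inferInstanceAs (Module (ZMod 2) (cycles L p ⧸
    Submodule.comap (cycles L p).subtype (boundaries L p)))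

/-- The boundary of the cell `y`, as a chain. -/
def col (L : LC C) (y : C) : C → ZMod 2 := fun x => L.bd x y

/-- The chain `v` is the boundary of a chain supported on cells with filter
value `< b`. -/
def IsBdryBelow (L : LC C) (f : C → ℝ) (b : ℝ) (v : C → ZMod 2) : Prop :=
  ∃ c : C → ZMod 2, (∀ z, c z ≠ 0 → z ∈ L.cells ∧ f z < b) ∧ bdOp L c = v

/-- The cell `y` gives death: `[∂y] ≠ 0` in the homology of the sublevel set
strictly below `f y`. -/
def givesDeath (L : LC C) (f : C → ℝ) (y : C) : Prop :=
  y ∈ L.cells ∧ ¬ IsBdryBelow L f (f y) (col L y)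

/-- The cell `y` gives birth: `[∂y] = 0` in the homology of the sublevel set
strictly below `f y`. -/
def givesBirth (L : LC C) (f : C → ℝ) (y : C) : Prop :=
  y ∈ L.cells ∧ IsBdryBelow L f (f y) (col L y)

/-- The unique chain supported on death-giving cells below `y` whose boundary
is `∂y` (for birth-giving `y`); junk value otherwise. -/
noncomputable def canChain (L : LC C) (f : C → ℝ) (y : C) : C → ZMod 2 :=
  if h : ∃ c : C → ZMod 2,
      (∀ z, c z ≠ 0 → f z < f y ∧ givesDeath L f z) ∧ bdOp L c = col L y
  then h.choose else 0

/-- The canonical cycle `d_y = y + c_y` of a birth-giving cell `y`. -/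
noncomputable def canCycle (L : LC C) (f : C → ℝ) (y : C) : C → ZMod 2 :=
  Pi.single y 1 + canChain L f y

/-- `v` and `w` are homologous in the sublevel complex strictly below `b`. -/
def HomBelow (L : LC C) (f : C → ℝ) (b : ℝ) (v w : C → ZMod 2) : Prop :=
  ∃ c : C → ZMod 2, (∀ z, c z ≠ 0 → z ∈ L.cells ∧ f z < b) ∧ bdOp L c = v + w

/-- Sorting a finset of cells by increasing filter value (fueled recursion). -/
noncomputable def sortAux (f : C → ℝ) : ℕ → Finset C → List C
  | 0, _ => []
  | n + 1, S =>
    if h : S.Nonempty then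
      let m := (Finset.exists_min_image S f h).choose
      m :: sortAux f n (S.erase m)
    else []

/-- The cells of `L` listed in increasing order of filter value. -/
noncomputable def sortedCells (L : LC C) (f : C → ℝ) : List C :=
  sortAux f L.cells.card L.cells

/-- An element of `S` maximizing `f`, with default value. -/
noncomputable def maxCellD (f : C → ℝ) (S : Finset C) (dflt : C) : C :=
  if h : S.Nonempty then (Finset.exists_max_image S f h).choose else dflt

/-- One step of the persistence pairing algorithm: the state is the pair
(unpaired birth-giving cells, birth-death pairs found so far), and `y` is the
next cell in the filter order.  If `y` gives birth it is added to the unpaired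
set; if `y` gives death, the unique subset `A` of the unpaired cells whose
canonical cycles sum to a cycle homologous to `∂y` below `y` is found, and `y`
is paired with the cell of `A` of maximal filter value. -/
noncomputable def pairStep (L : LC C) (f : C → ℝ) (st : Finset C × Finset (C × C))
    (y : C) : Finset C × Finset (C × C) :=
  if givesBirth L f y then (insert y st.1, st.2)
  else
    let A : Finset C :=
      if h : ∃! A : Finset C, A ⊆ st.1 ∧
          HomBelow L f (f y) (∑ x ∈ A, canCycle L f x) (col L y)
      then h.exists.choose else ∅
    let s := maxCellD f A y
    (st.1.erase s, insert (s, y) st.2)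

/-- The state of the persistence pairing after processing all cells. -/
noncomputable def pairState (L : LC C) (f : C → ℝ) : Finset C × Finset (C × C) :=
  (sortedCells L f).foldl (pairStep L f) (∅, ∅)

/-- The birth-death pairs `BD(f)` of the filter `f`. -/
noncomputable def BD (L : LC C) (f : C → ℝ) : Finset (C × C) :=
  (pairState L f).2

/-- The state of the persistence pairing after processing the cells with
filter value `< b`. -/
noncomputable def stateBelow (L : LC C) (f : C → ℝ) (b : ℝ) :
    Finset C × Finset (C × C) :=
  ((sortedCells L f).filter (fun x => decide (f x < b))).foldl (pairStep L f) (∅, ∅)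

/-- The birth-giving cells with value `< b` that are unpaired by the
persistence pairing restricted to the sublevel set below `b`. -/
noncomputable def unpairedBelow (L : LC C) (f : C → ℝ) (b : ℝ) : Finset C :=
  (stateBelow L f b).1

/-- `(s,t)` is a shallow pair: `s` is the facet of `t` with maximal filter
value and `t` is the cofacet of `s` with minimal filter value. -/
def IsShallow (L : LC C) (f : C → ℝ) (s t : C) : Prop :=
  L.bd s t = 1 ∧ (∀ x, L.bd x t ≠ 0 → f x ≤ f s) ∧ (∀ y, L.bd s y ≠ 0 → f t ≤ f y)

/-- Cancel a list of pairs in sequence. -/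
noncomputable def cancelList : LC C → List (C × C) → LC C
  | L, [] => L
  | L, p :: ps => cancelList (cancel L p.1 p.2) ps

/-- The quotient after canceling the first `k` pairs of the sequence `Φ`. -/
noncomputable def quotAt (L : LC C) {n : ℕ} (Φ : Fin n → C × C) (k : ℕ) : LC C :=
  cancelList L ((List.ofFn Φ).take k)

/-- `Φ` is a shallow order: an enumeration of the birth-death pairs of `f`
such that each pair is shallow for the quotient obtained by canceling all
preceding pairs. -/
def IsShallowOrder (L : LC C) (f : C → ℝ) {n : ℕ} (Φ : Fin n → C × C) : Prop :=
  Function.Injective Φ ∧ (∀ i, Φ i ∈ BD L f) ∧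
  ∀ i : Fin n, IsShallow (quotAt L Φ i) f (Φ i).1 (Φ i).2

/-- The depth poset: the intersection of the strict total orders induced on
`BD(f)` by all shallow orders. -/
def DepthRel (L : LC C) (f : C → ℝ) (φ ψ : C × C) : Prop :=
  φ ∈ BD L f ∧ ψ ∈ BD L f ∧
  ∀ Φ : Fin (BD L f).card → C × C, IsShallowOrder L f Φ →
    ∀ i j : Fin (BD L f).card, Φ i = φ → Φ j = ψ → i < j

/-- The rank of the lower-left minor of the ordered boundary matrix with rows
the cells of filter value `≥ a` and columns the cells of filter value `≤ b`. -/
noncomputable def llRank (L : LC C) (f : C → ℝ) (a b : ℝ) : ℕ :=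
  Matrix.rank (Matrix.of fun (x : {x : C // x ∈ L.cells ∧ a ≤ f x})
    (y : {y : C // y ∈ L.cells ∧ f y ≤ b}) => L.bd x.1 y.1)

/-- `Φ` and `Ψ` differ by transposing two adjacent positions. -/
def AdjSwap {n : ℕ} (Φ Ψ : Fin n → C × C) : Prop :=
  ∃ (k : Fin n) (hk : (k : ℕ) + 1 < n),
    Ψ k = Φ ⟨k + 1, hk⟩ ∧ Ψ ⟨k + 1, hk⟩ = Φ k ∧
    ∀ i : Fin n, i ≠ k → i ≠ ⟨k + 1, hk⟩ → Ψ i = Φ i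

/-! Cancelling two disjoint shallow pairs in either order gives the same quotient, and each stays
shallow after the other is cancelled, so shallow sequences may be rearranged freely. Call a
sequence of birth-death pairs whose successive cancellation makes `p` shallow a route for `p`.
If `p` is not shallow, then the facet of `p.2` of largest value above `f p.1`, or the cofacet of
`p.1` of smallest value below `f p.2`, keeps its incidence and its extremality through every
cancellation not involving it; hence one fixed pair lies on every route. Iterating gives a least
route `M` of `p`. Every shallow order cancels all of `M` before `p`, so `M` lies below `p` in
`Depth(f)`. A linear extension therefore cancels `M` before reaching `p`, and moving `M` to the
front of its prefix shows that `p` is shallow when its turn comes. -/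

variable {f : C → ℝ}

open Function

namespace LC

variable {L : LC C} {x y : C}

lemma mem_cells_left (h : L.bd x y ≠ 0) : x ∈ L.cells := (L.bd_mem x y h).1

lemma mem_cells_right (h : L.bd x y ≠ 0) : y ∈ L.cells := (L.bd_mem x y h).2

lemma bd_eq_zero_of_left_notMem (h : x ∉ L.cells) : L.bd x y = 0 :=
  not_imp_comm.1 L.mem_cells_left h

lemma bd_eq_zero_of_right_notMem (h : y ∉ L.cells) : L.bd x y = 0 :=
  not_imp_comm.1 L.mem_cells_right h

protected lemma ext {L₁ L₂ : LC C} (hc : L₁.cells = L₂.cells) (hd : L₁.dim = L₂.dim)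
    (hb : L₁.bd = L₂.bd) : L₁ = L₂ := by
  cases L₁; cases L₂; congr

end LC

section Cancel

variable {L : LC C} {s t u v x y : C}

lemma cancel_cells (hst : L.bd s t = 1) : (cancel L s t).cells = L.cells \ {s, t} := by
  rw [cancel, dif_pos hst]

lemma cancel_dim (hst : L.bd s t = 1) : (cancel L s t).dim = L.dim := by
  rw [cancel, dif_pos hst]

lemma cancel_bd_apply (hst : L.bd s t = 1) (hx : x ∉ ({s, t} : Finset C))
    (hy : y ∉ ({s, t} : Finset C)) :
    (cancel L s t).bd x y = L.bd x y + L.bd s y * L.bd x t := by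
  rw [cancel, dif_pos hst]
  simp only [cancelBd, Finset.mem_sdiff, hx, hy, not_false_eq_true, and_true]
  split_ifs with h
  · rfl
  · rcases not_and_or.1 h with h | h
    · simp [LC.bd_eq_zero_of_left_notMem h]
    · simp [LC.bd_eq_zero_of_right_notMem h]

lemma cancel_bd_ne_zero (hst : L.bd s t = 1) (h : (cancel L s t).bd x y ≠ 0) :
    L.bd x y ≠ 0 ∨ (L.bd s y ≠ 0 ∧ L.bd x t ≠ 0) := by
  rw [cancel, dif_pos hst] at h
  simp only [cancelBd] at h
  split_ifs at h
  · by_cases hxy : L.bd x y = 0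
    · rw [hxy, zero_add] at h
      exact .inr (mul_ne_zero_iff.1 h)
    · exact .inl hxy
  · exact absurd rfl h

lemma IsShallow.mem_cells_left (hst : IsShallow L f s t) : s ∈ L.cells :=
  L.mem_cells_left (hst.1 ▸ one_ne_zero)

lemma IsShallow.mem_cells_right (hst : IsShallow L f s t) : t ∈ L.cells :=
  L.mem_cells_right (hst.1 ▸ one_ne_zero)

lemma isFilter_cancel (hf : IsFilter L f) (hst : IsShallow L f s t) :
    IsFilter (cancel L s t) f := by
  have hsub : (cancel L s t).cells ⊆ L.cells := cancel_cells hst.1 ▸ Finset.sdiff_subset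
  refine ⟨fun x hx y hy => hf.1 x (hsub hx) y (hsub hy), fun x y hxy => ?_⟩
  rcases cancel_bd_ne_zero hst.1 hxy with h | ⟨hsy, hxt⟩
  · exact hf.2 x y h
  · calc f x ≤ f s := hst.2.1 x hxt
      _ < f t := hf.2 s t (hst.1 ▸ one_ne_zero)
      _ ≤ f y := hst.2.2 y hsy

lemma IsShallow.facets_le_cancel (hst : IsShallow L f s t) {c : ℝ}
    (h : ∀ x, L.bd x y ≠ 0 → f x ≤ c) : ∀ x, (cancel L s t).bd x y ≠ 0 → f x ≤ c :=
  fun x hx => (cancel_bd_ne_zero hst.1 hx).elim (h x)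
    fun ⟨hsy, hxt⟩ => (hst.2.1 x hxt).trans (h s hsy)

lemma IsShallow.cofacets_ge_cancel (hst : IsShallow L f s t) {c : ℝ}
    (h : ∀ y, L.bd x y ≠ 0 → c ≤ f y) : ∀ y, (cancel L s t).bd x y ≠ 0 → c ≤ f y :=
  fun y hy => (cancel_bd_ne_zero hst.1 hy).elim (h y)
    fun ⟨hsy, hxt⟩ => (h t hxt).trans (hst.2.2 y hsy)

lemma IsShallow.cross_eq_zero_of_facets_le (hf : IsFilter L f) (hst : IsShallow L f s t)
    (hxs : x ≠ s) (h : ∀ z, L.bd z y ≠ 0 → f z ≤ f x) : L.bd s y * L.bd x t = 0 := by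
  by_contra hne
  obtain ⟨hsy, hxt⟩ := mul_ne_zero_iff.1 hne
  exact hxs (hf.1 x (L.mem_cells_left hxt) s hst.mem_cells_left
    (le_antisymm (hst.2.1 x hxt) (h s hsy)))

lemma IsShallow.cross_eq_zero_of_cofacets_ge (hf : IsFilter L f) (hst : IsShallow L f s t)
    (hyt : y ≠ t) (h : ∀ z, L.bd x z ≠ 0 → f y ≤ f z) : L.bd s y * L.bd x t = 0 := by
  by_contra hne
  obtain ⟨hsy, hxt⟩ := mul_ne_zero_iff.1 hne
  exact hyt (hf.1 y (L.mem_cells_right hsy) t hst.mem_cells_right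
    (le_antisymm (h t hxt) (hst.2.2 y hsy)))

lemma IsShallow.cancel_bd_of_facets_le (hf : IsFilter L f) (hst : IsShallow L f s t)
    (hx : x ∉ ({s, t} : Finset C)) (hy : y ∉ ({s, t} : Finset C))
    (h : ∀ z, L.bd z y ≠ 0 → f z ≤ f x) : (cancel L s t).bd x y = L.bd x y := by
  have hxs : x ≠ s := by rintro rfl; simp at hx
  rw [cancel_bd_apply hst.1 hx hy, hst.cross_eq_zero_of_facets_le hf hxs h, add_zero]

lemma IsShallow.cancel_bd_of_cofacets_ge (hf : IsFilter L f) (hst : IsShallow L f s t)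
    (hx : x ∉ ({s, t} : Finset C)) (hy : y ∉ ({s, t} : Finset C))
    (h : ∀ z, L.bd x z ≠ 0 → f y ≤ f z) : (cancel L s t).bd x y = L.bd x y := by
  have hyt : y ≠ t := by rintro rfl; simp at hy
  rw [cancel_bd_apply hst.1 hx hy, hst.cross_eq_zero_of_cofacets_ge hf hyt h, add_zero]

lemma isShallow_cancel (hf : IsFilter L f) (hst : IsShallow L f s t) (huv : IsShallow L f u v)
    (hu : u ∉ ({s, t} : Finset C)) (hv : v ∉ ({s, t} : Finset C)) :
    IsShallow (cancel L s t) f u v :=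
  ⟨(hst.cancel_bd_of_facets_le hf hu hv huv.2.1).trans huv.1,
    hst.facets_le_cancel huv.2.1, hst.cofacets_ge_cancel huv.2.2⟩

lemma cancel_comm (hf : IsFilter L f) (hst : IsShallow L f s t)
    (huv : IsShallow L f u v) (hd : Disjoint ({s, t} : Finset C) {u, v}) :
    cancel (cancel L s t) u v = cancel (cancel L u v) s t := by
  have hu : u ∉ ({s, t} : Finset C) := Finset.disjoint_right.1 hd (by simp)
  have hv : v ∉ ({s, t} : Finset C) := Finset.disjoint_right.1 hd (by simp)
  have hs : s ∉ ({u, v} : Finset C) := Finset.disjoint_left.1 hd (by simp)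
  have ht : t ∉ ({u, v} : Finset C) := Finset.disjoint_left.1 hd (by simp)
  have h₁ := isShallow_cancel hf hst huv hu hv
  have h₂ := isShallow_cancel hf huv hst hs ht
  have key : L.bd s v * L.bd u t = 0 :=
    hst.cross_eq_zero_of_facets_le hf (by rintro rfl; simp at hu) huv.2.1
  have hcells : (cancel (cancel L s t) u v).cells = (cancel (cancel L u v) s t).cells := by
    rw [cancel_cells h₁.1, cancel_cells h₂.1, cancel_cells hst.1, cancel_cells huv.1,
      sdiff_sdiff_comm]
  refine LC.ext hcells (by rw [cancel_dim h₁.1, cancel_dim h₂.1, cancel_dim hst.1,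
    cancel_dim huv.1]) (funext₂ fun x y => ?_)
  by_cases hxy : x ∈ (cancel (cancel L s t) u v).cells ∧ y ∈ (cancel (cancel L s t) u v).cells
  · obtain ⟨hx, hy⟩ := hxy
    simp only [cancel_cells h₁.1, cancel_cells hst.1, Finset.mem_sdiff] at hx hy
    rw [cancel_bd_apply h₁.1 hx.2 hy.2, cancel_bd_apply h₂.1 hx.1.2 hy.1.2,
      cancel_bd_apply hst.1 hx.1.2 hy.1.2, cancel_bd_apply hst.1 hu hy.1.2,
      cancel_bd_apply hst.1 hx.1.2 hv, cancel_bd_apply huv.1 hx.2 hy.2,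
      cancel_bd_apply huv.1 hs hy.2, cancel_bd_apply huv.1 hx.2 ht]
    linear_combination (L.bd s y * L.bd x t - L.bd u y * L.bd x v) * key
  · rcases not_and_or.1 hxy with h | h
    · rw [LC.bd_eq_zero_of_left_notMem h, LC.bd_eq_zero_of_left_notMem (hcells ▸ h)]
    · rw [LC.bd_eq_zero_of_right_notMem h, LC.bd_eq_zero_of_right_notMem (hcells ▸ h)]

end Cancel

def pairCells {α : Type*} [DecidableEq α] (p : α × α) : Finset α := {p.1, p.2}

lemma fst_mem_pairCells {α : Type*} [DecidableEq α] (p : α × α) : p.1 ∈ pairCells p :=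
  Finset.mem_insert_self _ _

lemma snd_mem_pairCells {α : Type*} [DecidableEq α] (p : α × α) : p.2 ∈ pairCells p :=
  Finset.mem_insert_of_mem (Finset.mem_singleton_self _)

def IsShallowSeq (f : C → ℝ) : LC C → List (C × C) → Prop
  | _, [] => True
  | L, p :: l => IsShallow L f p.1 p.2 ∧ IsShallowSeq f (cancel L p.1 p.2) l

section ShallowSeq

variable {L : LC C} {p x : C × C} {l m : List (C × C)}

@[simp] lemma isShallowSeq_nil : IsShallowSeq f L [] := trivial

@[simp] lemma isShallowSeq_cons :
    IsShallowSeq f L (p :: l) ↔ IsShallow L f p.1 p.2 ∧ IsShallowSeq f (cancel L p.1 p.2) l :=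
  Iff.rfl

@[simp] lemma cancelList_nil : cancelList L [] = L := rfl

@[simp] lemma cancelList_cons : cancelList L (p :: l) = cancelList (cancel L p.1 p.2) l := rfl

lemma isShallowSeq_append :
    IsShallowSeq f L (l ++ m) ↔ IsShallowSeq f L l ∧ IsShallowSeq f (cancelList L l) m := by
  induction l generalizing L with
  | nil => simp
  | cons q l ih => simp [ih, and_assoc]

lemma IsShallowSeq.take (hl : IsShallowSeq f L l) (k : ℕ) : IsShallowSeq f L (l.take k) :=
  (isShallowSeq_append.1 ((List.take_append_drop k l).symm ▸ hl)).1

lemma isFilter_cancelList (hf : IsFilter L f) (hl : IsShallowSeq f L l) :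
    IsFilter (cancelList L l) f := by
  induction l generalizing L with
  | nil => exact hf
  | cons q l ih => exact ih (isFilter_cancel hf hl.1) hl.2

lemma IsShallowSeq.pairCells_subset (hl : IsShallowSeq f L l) :
    ∀ q ∈ l, pairCells q ⊆ L.cells := by
  induction l generalizing L with
  | nil => simp
  | cons p l ih =>
    intro q hq
    rcases List.mem_cons.1 hq with rfl | hq
    · exact Finset.insert_subset hl.1.mem_cells_left
        (Finset.singleton_subset_iff.2 hl.1.mem_cells_right)
    · exact (ih hl.2 q hq).trans (cancel_cells hl.1.1 ▸ Finset.sdiff_subset)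

lemma IsShallowSeq.pairwise_disjoint (hl : IsShallowSeq f L l) :
    l.Pairwise (Disjoint on pairCells) := by
  induction l generalizing L with
  | nil => exact .nil
  | cons p l ih =>
    refine .cons (fun q hq => ?_) (ih hl.2)
    have := hl.2.pairCells_subset q hq
    rw [cancel_cells hl.1.1] at this
    exact (Finset.subset_sdiff.1 this).2.symm

lemma IsShallowSeq.bd_eq_of_facets_le (hf : IsFilter L f) (hl : IsShallowSeq f L l) {x y : C}
    (hxy : ∀ q ∈ l, x ∉ pairCells q ∧ y ∉ pairCells q)
    (h : ∀ z, L.bd z y ≠ 0 → f z ≤ f x) :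
    (cancelList L l).bd x y = L.bd x y := by
  induction l generalizing L with
  | nil => rfl
  | cons q l ih =>
    obtain ⟨hx, hy⟩ := hxy q List.mem_cons_self
    rw [cancelList_cons, ih (isFilter_cancel hf hl.1) hl.2
      (fun r hr => hxy r (List.mem_cons_of_mem _ hr)) (hl.1.facets_le_cancel h),
      hl.1.cancel_bd_of_facets_le hf hx hy h]

lemma IsShallowSeq.bd_eq_of_cofacets_ge (hf : IsFilter L f) (hl : IsShallowSeq f L l) {x y : C}
    (hxy : ∀ q ∈ l, x ∉ pairCells q ∧ y ∉ pairCells q)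
    (h : ∀ z, L.bd x z ≠ 0 → f y ≤ f z) :
    (cancelList L l).bd x y = L.bd x y := by
  induction l generalizing L with
  | nil => rfl
  | cons q l ih =>
    obtain ⟨hx, hy⟩ := hxy q List.mem_cons_self
    rw [cancelList_cons, ih (isFilter_cancel hf hl.1) hl.2
      (fun r hr => hxy r (List.mem_cons_of_mem _ hr)) (hl.1.cofacets_ge_cancel h),
      hl.1.cancel_bd_of_cofacets_ge hf hx hy h]

lemma IsShallowSeq.isShallow_cancelList (hf : IsFilter L f) (hl : IsShallowSeq f L l)
    (hp : IsShallow L f p.1 p.2) (hd : ∀ q ∈ l, Disjoint (pairCells q) (pairCells p)) :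
    IsShallow (cancelList L l) f p.1 p.2 := by
  induction l generalizing L with
  | nil => exact hp
  | cons q l ih =>
    have hqp := hd q List.mem_cons_self
    exact ih (isFilter_cancel hf hl.1) hl.2
      (isShallow_cancel hf hl.1 hp (Finset.disjoint_right.1 hqp (fst_mem_pairCells p))
        (Finset.disjoint_right.1 hqp (snd_mem_pairCells p)))
      (fun r hr => hd r (List.mem_cons_of_mem _ hr))

lemma IsShallowSeq.cons_erase (hf : IsFilter L f) (hl : IsShallowSeq f L l)
    (hx : IsShallow L f x.1 x.2) (hxl : x ∈ l) :
    IsShallowSeq f L (x :: l.erase x) ∧ cancelList L (x :: l.erase x) = cancelList L l := by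
  induction l generalizing L with
  | nil => cases hxl
  | cons p l ih =>
    by_cases hxp : x = p
    · subst hxp
      rw [List.erase_cons_head]
      exact ⟨hl, rfl⟩
    have hxl' : x ∈ l := (List.mem_cons.1 hxl).resolve_left hxp
    have hpx : Disjoint (pairCells p) (pairCells x) :=
      (List.pairwise_cons.1 hl.pairwise_disjoint).1 x hxl'
    have hx' := isShallow_cancel hf hl.1 hx (Finset.disjoint_right.1 hpx (fst_mem_pairCells x))
      (Finset.disjoint_right.1 hpx (snd_mem_pairCells x))
    have hp' := isShallow_cancel hf hx hl.1 (Finset.disjoint_left.1 hpx (fst_mem_pairCells p))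
      (Finset.disjoint_left.1 hpx (snd_mem_pairCells p))
    have hcomm := cancel_comm hf hx hl.1 hpx.symm
    obtain ⟨ih₁, ih₂⟩ := ih (isFilter_cancel hf hl.1) hl.2 hx' hxl'
    rw [List.erase_cons_tail (by simpa using Ne.symm hxp)]
    refine ⟨⟨hx, hp', ?_⟩, ?_⟩
    · rw [hcomm]; exact ih₁.2
    · simp only [cancelList_cons, hcomm]; exact ih₂

lemma IsShallowSeq.reorder (hf : IsFilter L f) (hl : IsShallowSeq f L l)
    (hm : IsShallowSeq f L m) (hml : m ⊆ l) (hnd : m.Nodup) :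
    ∃ l', l' ⊆ l ∧ IsShallowSeq f (cancelList L m) l' ∧
      cancelList (cancelList L m) l' = cancelList L l := by
  induction m generalizing L l with
  | nil => exact ⟨l, List.Subset.refl l, hl, rfl⟩
  | cons y m ih =>
    obtain ⟨hyl, hyl_eq⟩ := hl.cons_erase hf hm.1 (hml List.mem_cons_self)
    have hml' : m ⊆ l.erase y := fun q hq =>
      (List.mem_erase_of_ne (ne_of_mem_of_not_mem hq (List.nodup_cons.1 hnd).1)).2
        (hml (List.mem_cons_of_mem _ hq))
    obtain ⟨l', hl'l, hl'seq, hl'eq⟩ :=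
      ih (isFilter_cancel hf hm.1) hyl.2 hm.2 hml' (List.nodup_cons.1 hnd).2
    exact ⟨l', List.Subset.trans hl'l List.erase_subset, hl'seq, hl'eq.trans hyl_eq⟩

end ShallowSeq

structure IsRoute (f : C → ℝ) (L : LC C) (U : Finset (C × C)) (p : C × C)
    (l : List (C × C)) : Prop where
  isShallowSeq : IsShallowSeq f L l
  nodup : l.Nodup
  subset : ∀ q ∈ l, q ∈ U
  not_mem : p ∉ l
  isShallow : IsShallow (cancelList L l) f p.1 p.2

def IsForced (f : C → ℝ) (L : LC C) (U : Finset (C × C)) (p x : C × C) : Prop :=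
  ∀ l, IsRoute f L U p l → x ∈ l

section Route

variable {L : LC C} {U : Finset (C × C)} {p x : C × C} {l : List (C × C)}

lemma IsRoute.disjoint (hU : (U : Set (C × C)).PairwiseDisjoint pairCells) (hpU : p ∈ U)
    (hl : IsRoute f L U p l) : ∀ q ∈ l, Disjoint (pairCells q) (pairCells p) :=
  fun q hq => hU (hl.subset q hq) hpU (ne_of_mem_of_not_mem hq hl.not_mem)

lemma IsRoute.notMem_pairCells (hU : (U : Set (C × C)).PairwiseDisjoint pairCells)
    (hpU : p ∈ U) (hl : IsRoute f L U p l) :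
    ∀ q ∈ l, p.1 ∉ pairCells q ∧ p.2 ∉ pairCells q := fun q hq =>
  ⟨Finset.disjoint_right.1 (hl.disjoint hU hpU q hq) (fst_mem_pairCells p),
    Finset.disjoint_right.1 (hl.disjoint hU hpU q hq) (snd_mem_pairCells p)⟩

lemma IsRoute.prefix {l₁ l₂ : List (C × C)} (hl : IsRoute f L U p (l₁ ++ x :: l₂)) :
    IsRoute f L U x l₁ where
  isShallowSeq := (isShallowSeq_append.1 hl.isShallowSeq).1
  nodup := (List.nodup_append.1 hl.nodup).1
  subset q hq := hl.subset q (List.mem_append_left _ hq)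
  not_mem hx := (List.nodup_append.1 hl.nodup).2.2 x hx x List.mem_cons_self rfl
  isShallow := (isShallowSeq_append.1 hl.isShallowSeq).2.1

lemma IsRoute.cancel_erase (hf : IsFilter L f) (hl : IsRoute f L U p l) (hx : IsShallow L f x.1 x.2)
    (hxl : x ∈ l) : IsRoute f (cancel L x.1 x.2) (U.erase x) p (l.erase x) := by
  obtain ⟨hseq, heq⟩ := hl.isShallowSeq.cons_erase hf hx hxl
  refine ⟨hseq.2, hl.nodup.erase x, fun q hq => ?_, fun hp => hl.not_mem
    (List.mem_of_mem_erase hp), ?_⟩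
  · obtain ⟨hqx, hql⟩ := (hl.nodup.mem_erase_iff).1 hq
    exact Finset.mem_erase.2 ⟨hqx, hl.subset q hql⟩
  · rw [← cancelList_cons, heq]
    exact hl.isShallow

lemma IsRoute.cons (hx : IsShallow L f x.1 x.2) (hxU : x ∈ U) (hxp : x ≠ p)
    (hl : IsRoute f (cancel L x.1 x.2) (U.erase x) p l) : IsRoute f L U p (x :: l) where
  isShallowSeq := ⟨hx, hl.isShallowSeq⟩
  nodup := List.nodup_cons.2 ⟨fun h => (Finset.mem_erase.1 (hl.subset x h)).1 rfl, hl.nodup⟩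
  subset q hq := (List.mem_cons.1 hq).elim (· ▸ hxU)
    fun hq => Finset.mem_of_mem_erase (hl.subset q hq)
  not_mem hp := (List.mem_cons.1 hp).elim (fun h => hxp h.symm) hl.not_mem
  isShallow := hl.isShallow

lemma IsRoute.exists_mem_pairCells_of_facet (hf : IsFilter L f)
    (hU : (U : Set (C × C)).PairwiseDisjoint pairCells) (hpU : p ∈ U)
    (hl : IsRoute f L U p l) {a : C} (ha : L.bd a p.2 ≠ 0) (hlt : f p.1 < f a)
    (hmax : ∀ y, L.bd y p.2 ≠ 0 → f y ≤ f a) : ∃ q ∈ l, a ∈ pairCells q := by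
  by_contra! hna
  have hbd := hl.isShallowSeq.bd_eq_of_facets_le hf
    (fun q hq => ⟨hna q hq, (hl.notMem_pairCells hU hpU q hq).2⟩) hmax
  have := hl.isShallow.2.1 a (hbd ▸ ha)
  linarith

lemma IsRoute.exists_mem_pairCells_of_cofacet (hf : IsFilter L f)
    (hU : (U : Set (C × C)).PairwiseDisjoint pairCells) (hpU : p ∈ U)
    (hl : IsRoute f L U p l) {b : C} (hb : L.bd p.1 b ≠ 0) (hlt : f b < f p.2)
    (hmin : ∀ y, L.bd p.1 y ≠ 0 → f b ≤ f y) : ∃ q ∈ l, b ∈ pairCells q := by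
  by_contra! hnb
  have hbd := hl.isShallowSeq.bd_eq_of_cofacets_ge hf
    (fun q hq => ⟨(hl.notMem_pairCells hU hpU q hq).1, hnb q hq⟩) hmin
  have := hl.isShallow.2.2 b (hbd ▸ hb)
  linarith

lemma IsRoute.isShallow_of_facets_le_of_cofacets_ge (hf : IsFilter L f)
    (hU : (U : Set (C × C)).PairwiseDisjoint pairCells) (hpU : p ∈ U)
    (hl : IsRoute f L U p l) (hfacet : ∀ y, L.bd y p.2 ≠ 0 → f y ≤ f p.1)
    (hcofacet : ∀ y, L.bd p.1 y ≠ 0 → f p.2 ≤ f y) : IsShallow L f p.1 p.2 :=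
  ⟨hl.isShallowSeq.bd_eq_of_facets_le hf (hl.notMem_pairCells hU hpU) hfacet ▸ hl.isShallow.1,
    hfacet, hcofacet⟩

lemma IsForced.trans {z : C × C} (hx : IsForced f L U p x) (hz : IsForced f L U x z) :
    IsForced f L U p z := fun l hl => by
  obtain ⟨l₁, l₂, rfl⟩ := List.append_of_mem (hx l hl)
  exact List.mem_append_left _ (hz l₁ hl.prefix)

lemma exists_isForced (hf : IsFilter L f)
    (hU : (U : Set (C × C)).PairwiseDisjoint pairCells) (hpU : p ∈ U)
    (hp : ¬ IsShallow L f p.1 p.2) (hl : IsRoute f L U p l) : ∃ x, IsForced f L U p x := by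
  suffices ∃ c, ∀ l, IsRoute f L U p l → ∃ q ∈ l, c ∈ pairCells q by
    obtain ⟨c, hc⟩ := this
    obtain ⟨x, hx, hcx⟩ := hc l hl
    refine ⟨x, fun l' hl' => ?_⟩
    obtain ⟨q, hq, hcq⟩ := hc l' hl'
    obtain rfl : q = x := by
      by_contra hne
      exact Finset.disjoint_left.1 (hU (hl'.subset q hq) (hl.subset x hx) hne) hcq hcx
    exact hq
  by_cases hfacet : ∃ y, L.bd y p.2 ≠ 0 ∧ f p.1 < f y
  · obtain ⟨y, hy, hlt⟩ := hfacet
    obtain ⟨a, ha, hmax⟩ := Finset.exists_max_image (L.cells.filter (L.bd · p.2 ≠ 0)) f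
      ⟨y, Finset.mem_filter.2 ⟨L.mem_cells_left hy, hy⟩⟩
    have ha' := (Finset.mem_filter.1 ha).2
    exact ⟨a, fun l hl => hl.exists_mem_pairCells_of_facet hf hU hpU ha'
      (hlt.trans_le (hmax y (Finset.mem_filter.2 ⟨L.mem_cells_left hy, hy⟩)))
      fun z hz => hmax z (Finset.mem_filter.2 ⟨L.mem_cells_left hz, hz⟩)⟩
  by_cases hcofacet : ∃ y, L.bd p.1 y ≠ 0 ∧ f y < f p.2
  · obtain ⟨y, hy, hlt⟩ := hcofacet
    obtain ⟨b, hb, hmin⟩ := Finset.exists_min_image (L.cells.filter (L.bd p.1 · ≠ 0)) f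
      ⟨y, Finset.mem_filter.2 ⟨L.mem_cells_right hy, hy⟩⟩
    have hb' := (Finset.mem_filter.1 hb).2
    exact ⟨b, fun l hl => hl.exists_mem_pairCells_of_cofacet hf hU hpU hb'
      ((hmin y (Finset.mem_filter.2 ⟨L.mem_cells_right hy, hy⟩)).trans_lt hlt)
      fun z hz => hmin z (Finset.mem_filter.2 ⟨L.mem_cells_right hz, hz⟩)⟩
  push Not at hfacet hcofacet
  exact absurd (hl.isShallow_of_facets_le_of_cofacets_ge hf hU hpU hfacet hcofacet) hp

theorem exists_isForced_isShallow {L : LC C} {U : Finset (C × C)} {p x : C × C}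
    (hf : IsFilter L f)
    (hU : (U : Set (C × C)).PairwiseDisjoint pairCells) (l₁ : List (C × C))
    {l₂ : List (C × C)} (hl : IsRoute f L U p (l₁ ++ x :: l₂)) (hx : IsForced f L U p x) :
    ∃ y, IsForced f L U p y ∧ IsShallow L f y.1 y.2 := by
  by_cases hxs : IsShallow L f x.1 x.2
  · exact ⟨x, hx, hxs⟩
  obtain ⟨z, hz⟩ := exists_isForced hf hU (hl.subset x (by simp)) hxs hl.prefix
  obtain ⟨a, b, hab⟩ := List.append_of_mem (hz _ hl.prefix)
  exact exists_isForced_isShallow hf hU a (l₂ := b ++ x :: l₂) (by simpa [hab] using hl)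
    (hx.trans hz)
termination_by l₁.length
decreasing_by rw [hab]; simp

theorem exists_minimal_route {L : LC C} {U : Finset (C × C)} {p : C × C} {l : List (C × C)}
    (hf : IsFilter L f)
    (hU : (U : Set (C × C)).PairwiseDisjoint pairCells) (hpU : p ∈ U)
    (hl : IsRoute f L U p l) :
    ∃ M, IsRoute f L U p M ∧ ∀ l', IsRoute f L U p l' → M ⊆ l' := by
  by_cases hp : IsShallow L f p.1 p.2
  · exact ⟨[], ⟨trivial, List.nodup_nil, by simp, List.not_mem_nil, hp⟩,
      fun l' _ => List.nil_subset l'⟩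
  obtain ⟨x₀, hx₀⟩ := exists_isForced hf hU hpU hp hl
  obtain ⟨l₁, l₂, hsplit⟩ := List.append_of_mem (hx₀ l hl)
  obtain ⟨x, hx, hxs⟩ := exists_isForced_isShallow hf hU l₁ (hsplit ▸ hl) hx₀
  have hxl := hx l hl
  have hxU := hl.subset x hxl
  have hxp : x ≠ p := ne_of_mem_of_not_mem hxl hl.not_mem
  obtain ⟨M, hM, hMmin⟩ := exists_minimal_route (isFilter_cancel hf hxs)
    (hU.subset (Finset.coe_subset.2 (Finset.erase_subset x U)))
    (Finset.mem_erase.2 ⟨hxp.symm, hpU⟩) (hl.cancel_erase hf hxs hxl)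
  refine ⟨x :: M, hM.cons hxs hxU hxp, fun l' hl' => List.cons_subset.2 ⟨hx l' hl', ?_⟩⟩
  exact List.Subset.trans (hMmin _ (hl'.cancel_erase hf hxs (hx l' hl'))) List.erase_subset
termination_by l.length
decreasing_by
  rw [List.length_erase_of_mem hxl]
  have := List.length_pos_of_mem hxl
  omega

lemma IsRoute.isShallow_cancelList_of_subset (hf : IsFilter L f)
    (hU : (U : Set (C × C)).PairwiseDisjoint pairCells) (hpU : p ∈ U)
    {M : List (C × C)} (hM : IsRoute f L U p M) (hl : IsShallowSeq f L l)
    (hlU : ∀ q ∈ l, q ∈ U) (hpl : p ∉ l) (hMl : M ⊆ l) :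
    IsShallow (cancelList L l) f p.1 p.2 := by
  obtain ⟨l', hl'l, hl'seq, hl'eq⟩ := hl.reorder hf hM.isShallowSeq hMl hM.nodup
  rw [← hl'eq]
  exact hl'seq.isShallow_cancelList (isFilter_cancelList hf hM.isShallowSeq) hM.isShallow
    fun q hq => hU (hlU q (hl'l hq)) hpU (ne_of_mem_of_not_mem (hl'l hq) hpl)

end Route

lemma mem_take_ofFn_iff {α : Type*} {n k : ℕ} {Φ : Fin n → α} {r : α} :
    r ∈ (List.ofFn Φ).take k ↔ ∃ j : Fin n, (j : ℕ) < k ∧ Φ j = r := by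
  simp only [List.mem_take_iff_getElem, List.length_ofFn, List.getElem_ofFn, lt_min_iff]
  exact ⟨fun ⟨j, hj, h⟩ => ⟨⟨j, hj.2⟩, hj.1, h⟩,
    fun ⟨j, hj, h⟩ => ⟨j, ⟨hj, j.2⟩, h⟩⟩

lemma take_succ_ofFn {α : Type*} {n k : ℕ} (Φ : Fin n → α) (hk : k < n) :
    (List.ofFn Φ).take (k + 1) = (List.ofFn Φ).take k ++ [Φ ⟨k, hk⟩] := by
  simp [List.take_add_one, hk]

lemma exists_apply_eq_of_injective {α : Type*} {s : Finset α} {Φ : Fin s.card → α}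
    (hinj : Injective Φ) (hmem : ∀ i, Φ i ∈ s) : ∀ r ∈ s, ∃ i, Φ i = r := by
  intro r hr
  obtain ⟨i, -, hi⟩ := Finset.surj_on_of_inj_on_of_card_le (s := Finset.univ)
    (fun i _ => Φ i) (fun i _ => hmem i) (fun _ _ _ _ h => hinj h) (by simp) r hr
  exact ⟨i, hi.symm⟩

section ShallowOrder

variable {L : LC C} {n : ℕ}

lemma isShallowSeq_iff_getElem {l : List (C × C)} :
    IsShallowSeq f L l ↔ ∀ (k : ℕ) (hk : k < l.length),
      IsShallow (cancelList L (l.take k)) f l[k].1 l[k].2 := by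
  induction l generalizing L with
  | nil => simp
  | cons p l ih =>
    rw [isShallowSeq_cons, ih]
    constructor
    · rintro ⟨hp, hl⟩ (_ | k) hk
      · simpa using hp
      · simpa using hl k (by simpa using hk)
    · intro h
      refine ⟨?_, fun k hk => ?_⟩
      · have := h 0 (by simp)
        simpa using this
      · have := h (k + 1) (by simpa using hk)
        simpa using this

lemma isShallowSeq_ofFn_iff {Φ : Fin n → C × C} :
    IsShallowSeq f L (List.ofFn Φ) ↔
      ∀ i : Fin n, IsShallow (quotAt L Φ i) f (Φ i).1 (Φ i).2 := by
  simp [isShallowSeq_iff_getElem, quotAt, Fin.forall_iff]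

lemma IsShallowOrder.isRoute {Φ : Fin n → C × C} (hΦ : IsShallowOrder L f Φ) (b : Fin n) :
    IsRoute f L (BD L f) (Φ b) ((List.ofFn Φ).take b) where
  isShallowSeq := (isShallowSeq_ofFn_iff.2 hΦ.2.2).take b
  nodup := (List.take_sublist _ _).nodup (List.nodup_ofFn.2 hΦ.1)
  subset q hq := by
    obtain ⟨j, -, rfl⟩ := mem_take_ofFn_iff.1 hq
    exact hΦ.2.1 j
  not_mem h := by
    obtain ⟨j, hj, hjb⟩ := mem_take_ofFn_iff.1 h
    exact (hΦ.1 hjb ▸ hj).false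
  isShallow := hΦ.2.2 b

lemma IsShallowOrder.pairwise_disjoint {Φ : Fin (BD L f).card → C × C}
    (hΦ : IsShallowOrder L f Φ) : (BD L f : Set (C × C)).PairwiseDisjoint pairCells := by
  intro r₁ h₁ r₂ h₂ hne
  obtain ⟨i, rfl⟩ := exists_apply_eq_of_injective hΦ.1 hΦ.2.1 r₁ h₁
  obtain ⟨j, rfl⟩ := exists_apply_eq_of_injective hΦ.1 hΦ.2.1 r₂ h₂
  have hpw := List.pairwise_ofFn.1 (isShallowSeq_ofFn_iff.2 hΦ.2.2).pairwise_disjoint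
  rcases lt_or_gt_of_ne (fun h => hne (congrArg Φ h)) with h | h
  · exact hpw h
  · exact (hpw h).symm

lemma depthRel_of_isForced {p r : C × C} (hr : r ∈ BD L f) (hp : p ∈ BD L f)
    (h : IsForced f L (BD L f) p r) : DepthRel L f r p :=
  ⟨hr, hp, fun Θ hΘ a b ha hb => by
    obtain ⟨a', ha', hΘa'⟩ := mem_take_ofFn_iff.1 (h _ (hb ▸ hΘ.isRoute b))
    rw [hΘ.1 (ha.trans hΘa'.symm)]
    exact ha'⟩

theorem isShallowSeq_take_of_linearExtension (hf : IsFilter L f)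
    {Φ : Fin (BD L f).card → C × C} (hinj : Injective Φ) (hmem : ∀ i, Φ i ∈ BD L f)
    (hext : ∀ i j, DepthRel L f (Φ i) (Φ j) → i < j) :
    ∀ k ≤ (BD L f).card, IsShallowSeq f L ((List.ofFn Φ).take k)
  | 0, _ => by simp
  | k + 1, hk => by
    set i : Fin (BD L f).card := ⟨k, hk⟩
    -- without any shallow order `DepthRel` would hold vacuously, even between `Φ i` and itself
    obtain ⟨Ψ, hΨ⟩ : ∃ Ψ, IsShallowOrder L f Ψ := by
      by_contra! h
      exact lt_irrefl i (hext i i ⟨hmem i, hmem i, fun Ψ hΨ => absurd hΨ (h Ψ)⟩)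
    have hU := hΨ.pairwise_disjoint
    obtain ⟨b, hb⟩ := exists_apply_eq_of_injective hΨ.1 hΨ.2.1 (Φ i) (hmem i)
    obtain ⟨M, hM, hMmin⟩ := exists_minimal_route hf hU (hmem i) (hb ▸ hΨ.isRoute b)
    have hMl : M ⊆ (List.ofFn Φ).take k := fun r hr => by
      obtain ⟨j, rfl⟩ := exists_apply_eq_of_injective hinj hmem r (hM.subset r hr)
      refine mem_take_ofFn_iff.2 ⟨j, hext j i ?_, rfl⟩
      exact depthRel_of_isForced (hmem j) (hmem i) fun l hl => hMmin l hl hr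
    have ih := isShallowSeq_take_of_linearExtension hf hinj hmem hext k (by omega)
    rw [take_succ_ofFn Φ hk, isShallowSeq_append]
    refine ⟨ih, hM.isShallow_cancelList_of_subset hf hU (hmem i) ih (fun q hq => ?_) (fun h => ?_)
      hMl, trivial⟩
    · obtain ⟨j, -, rfl⟩ := mem_take_ofFn_iff.1 hq
      exact hmem j
    · obtain ⟨j, hj, hji⟩ := mem_take_ofFn_iff.1 h
      exact (hinj hji ▸ hj).false

end ShallowOrder

/-- A bijection `Φ` onto `BD(f)` is a shallow order of `f`
if and only if it is a linear extension of the depth poset `Depth(f)`;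
in particular, every linear extension of `Depth(f)` is a shallow order. -/
theorem shallow_order_iff_linear_extension (L : LC C) (f : C → ℝ)
    (hf : IsFilter L f) (Φ : Fin (BD L f).card → C × C) :
    IsShallowOrder L f Φ ↔
      (Function.Injective Φ ∧ (∀ i, Φ i ∈ BD L f) ∧
        ∀ i j : Fin (BD L f).card, DepthRel L f (Φ i) (Φ j) → i < j) := by
  refine ⟨fun hΦ => ⟨hΦ.1, hΦ.2.1, fun i j hij => hij.2.2 Φ hΦ i j rfl rfl⟩,
    fun ⟨hinj, hmem, hext⟩ => ⟨hinj, hmem, isShallowSeq_ofFn_iff.1 ?_⟩⟩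
  simpa [List.take_of_length_le] using
    isShallowSeq_take_of_linearExtension hf hinj hmem hext _ le_rfl
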